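/- In the category Clus there exist bimorphisms that are not isomorphisms: with Σ₁ = ((x₁), ∅, [0]) and Σ₂ = ((x₁), (x₁), [0]), the identity of ℚ(x₁) induces a rooted cluster morphism f : ℤ[x₁] = A(Σ₁) → A(Σ₂) = ℤ[x₁, 2/x₁] which is both a monomorphism and an epimorphism in Clus but not an isomorphism. -/

import Mathlib

open scoped BigOperators
open scoped Classical

noncomputable section

universe u v w x₀

/-- A seed in an ambient field `K`: a cluster of elements of `K`, a distinguished subset
of exchangeable variables, and an exchange matrix indexed by `K` (only the entries on
the cluster are relevant). -/
structure Seed (K : Type u) [Field K] : Type u where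
  cluster : Set K
  ex : Set K
  ex_subset : ex ⊆ cluster
  B : K → K → ℤ

/-- Fomin–Zelevinsky matrix mutation in direction `k`. -/
def mutB {I : Type u} (B : I → I → ℤ) (k : I) : I → I → ℤ := fun y z =>
  if y = k ∨ z = k then -B y z
  else B y z + (|B y k| * B k z + B y k * |B k z|) / 2

namespace Seed

variable {K : Type u} {L : Type v} [Field K] [Field L]

/-- Local finiteness of the exchange matrix of a seed. -/
def LocFinite (S : Seed K) : Prop :=
  ∀ y ∈ S.cluster,
    {z | z ∈ S.cluster ∧ S.B y z ≠ 0}.Finite ∧ {z | z ∈ S.cluster ∧ S.B z y ≠ 0}.Finite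

/-- Skew-symmetrisability witnessed by a family `d` of positive integers. -/
def SkewSymmetrizableWith (S : Seed K) (d : K → ℤ) : Prop :=
  (∀ y ∈ S.cluster, 0 < d y) ∧
    ∀ y ∈ S.cluster, ∀ z ∈ S.cluster, d y * S.B y z = -(d z * S.B z y)

def SkewSymmetrizable (S : Seed K) : Prop := ∃ d, S.SkewSymmetrizableWith d

/-- The new cluster variable created by mutation of `S` in direction `x`:
`x * x' = ∏_{b_{xy} > 0} y ^ (b_{xy}) + ∏_{b_{xy} < 0} y ^ (-b_{xy})`. -/
def mutVar (S : Seed K) (x : K) : K :=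
  ((∏ᶠ y ∈ {y | y ∈ S.cluster ∧ 0 < S.B x y}, y ^ (S.B x y).toNat) +
      ∏ᶠ y ∈ {y | y ∈ S.cluster ∧ S.B x y < 0}, y ^ (-S.B x y).toNat) / x

/-- Mutation of a seed in direction `x`. -/
def mutate (S : Seed K) (x : K) : Seed K where
  cluster := insert (S.mutVar x) (S.cluster \ {x})
  ex := insert (S.mutVar x) (S.ex \ {x})
  ex_subset := Set.insert_subset_insert (Set.diff_subset_diff_left S.ex_subset)
  B := fun y z =>
    mutB S.B x (if y = S.mutVar x then x else y) (if z = S.mutVar x then x else z)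

/-- The correspondence `μ_{x,Σ}` on cluster variables. -/
def mutMap (S : Seed K) (x : K) : K → K := fun y => if y = x then S.mutVar x else y

/-- Iterated mutation along a list of directions. -/
def mutateSeq (S : Seed K) : List K → Seed K
  | [] => S
  | y :: l => (S.mutate y).mutateSeq l

/-- A sequence is `Σ`-admissible if each entry is exchangeable in the seed obtained by
mutating along the previous entries. -/
def Admissible (S : Seed K) : List K → Prop
  | [] => True
  | y :: l => y ∈ S.ex ∧ (S.mutate y).Admissible l

/-- The correspondence `μ_{x_n} ∘ ⋯ ∘ μ_{x_1, Σ}` on cluster variables. -/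
def mutSeqMap (S : Seed K) : List K → K → K
  | [] => id
  | y :: l => (S.mutate y).mutSeqMap l ∘ S.mutMap y

/-- The set of all cluster variables of the rooted cluster algebra of `S`. -/
def clusterVars (S : Seed K) : Set K :=
  ⋃ (l : List K) (_ : S.Admissible l), (S.mutateSeq l).cluster

/-- The rooted cluster algebra of `S`, as a subring (ℤ-subalgebra) of the ambient field. -/
def algebra (S : Seed K) : Subring K := Subring.closure S.clusterVars

/-- Equality of seeds (exchange matrices are compared on the cluster only). -/
def SameSeed (S T : Seed K) : Prop :=
  S.cluster = T.cluster ∧ S.ex = T.ex ∧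
    ∀ y ∈ S.cluster, ∀ z ∈ S.cluster, S.B y z = T.B y z

/-- The opposite seed. -/
def op (S : Seed K) : Seed K := ⟨S.cluster, S.ex, S.ex_subset, fun y z => -S.B y z⟩

/-- The simplification of a seed: all exchange matrix entries between pairs of frozen
variables are set to zero. -/
def simplify (S : Seed K) : Seed K :=
  ⟨S.cluster, S.ex, S.ex_subset, fun y z =>
    if y ∈ S.cluster \ S.ex ∧ z ∈ S.cluster \ S.ex then 0 else S.B y z⟩

/-- The full subseed of `S` on a subset `s` of the cluster. -/
def subseed (S : Seed K) (s : Set K) : Seed K :=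
  ⟨s, S.ex ∩ s, Set.inter_subset_right, S.B⟩

/-- The lower bound `ℤ[x \ ex][ex ∪ ex']` of the cluster algebra. -/
def lowerBound (S : Seed K) : Subring K :=
  Subring.closure (S.cluster ∪ ⋃ y ∈ S.ex, (S.mutate y).ex)

/-- The ring of Laurent polynomials `ℤ[x \ ex][e^{±1}]`. -/
def laurentRing (S : Seed K) (e : Set K) : Subring K :=
  Subring.closure ((S.cluster \ S.ex) ∪ e ∪ (fun a => a⁻¹) '' e)

/-- The upper bound `ℤ[x\ex][ex^{±1}] ∩ ⋂_{y ∈ ex} ℤ[x\ex][μ_y(ex)^{±1}]`. -/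
def upperBound (S : Seed K) : Subring K :=
  S.laurentRing S.ex ⊓ ⨅ y ∈ S.ex, S.laurentRing (S.mutate y).ex

end Seed

/-- An isomorphism of seeds along a map `φ` of ambient fields. -/
def SeedIso {K : Type u} {L : Type v} [Field K] [Field L]
    (S : Seed K) (T : Seed L) (φ : K → L) : Prop :=
  Set.BijOn φ S.cluster T.cluster ∧ Set.BijOn φ S.ex T.ex ∧
    ∀ y ∈ S.cluster, ∀ z ∈ S.cluster, T.B (φ y) (φ z) = S.B y z

def IsIsoSeeds {K : Type u} {L : Type v} [Field K] [Field L]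
    (S : Seed K) (T : Seed L) : Prop :=
  ∃ φ : K → L, SeedIso S T φ

/-- A genuine seed: a countable, algebraically independent cluster generating the
ambient field, with a locally finite skew-symmetrisable exchange matrix. -/
structure IsSeed {K : Type u} [Field K] (S : Seed K) : Prop where
  countable : S.cluster.Countable
  free : AlgebraicIndependent ℤ ((↑) : S.cluster → K)
  ambient : Subfield.closure S.cluster = ⊤
  locFin : S.LocFinite
  skew : S.SkewSymmetrizable

/-- The map on ambient fields underlying a ring homomorphism defined on a subring
(extended by zero outside the subring). -/
def subFn {K : Type u} {L : Type v} [Field K] [Field L] {R : Subring K}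
    (f : R →+* L) : K → L :=
  fun a => if h : a ∈ R then f ⟨a, h⟩ else 0

/-- The map on ambient fields underlying a ring homomorphism between rooted cluster
algebras (extended by zero outside of `A(S)`). -/
def mapFn {K : Type u} {L : Type v} [Field K] [Field L] (S : Seed K) {T : Seed L}
    (f : S.algebra →+* T.algebra) : K → L :=
  fun a => if h : a ∈ S.algebra then (f ⟨a, h⟩ : L) else 0

/-- A sequence is biadmissible when it is admissible for the source seed and its image
is admissible for the target seed. -/
def Biadmissible {K : Type u} {L : Type v} [Field K] [Field L]
    (S : Seed K) (T : Seed L) (g : K → L) (l : List K) : Prop :=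
  S.Admissible l ∧ T.Admissible (l.map g)

/-- The rooted cluster morphism conditions (CM1), (CM2), (CM3) for a ring homomorphism
`f : A(S) →+* A(T)`. -/
structure IsRCM {K : Type u} {L : Type v} [Field K] [Field L]
    (S : Seed K) (T : Seed L) (f : S.algebra →+* T.algebra) : Prop where
  cm1 : ∀ y ∈ S.cluster, mapFn S f y ∈ T.cluster ∪ Set.range ((↑) : ℤ → L)
  cm2 : ∀ y ∈ S.ex, mapFn S f y ∈ T.ex ∪ Set.range ((↑) : ℤ → L)
  cm3 : ∀ l : List K, Biadmissible S T (mapFn S f) l → ∀ y ∈ S.cluster,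
    mapFn S f (S.mutSeqMap l y) = T.mutSeqMap (l.map (mapFn S f)) (mapFn S f y)

/-- The image seed `f(Σ) = (x' ∩ f(x), ex' ∩ f(ex), B'[f(x)])` of a morphism. -/
def imageSeed {K : Type u} {L : Type v} [Field K] [Field L] (S : Seed K) {T : Seed L}
    (f : S.algebra →+* T.algebra) : Seed L :=
  ⟨T.cluster ∩ (mapFn S f '' S.cluster), T.ex ∩ (mapFn S f '' S.ex),
    Set.inter_subset_inter T.ex_subset (fun _ ⟨a, ha, e⟩ => ⟨a, S.ex_subset ha, e⟩), T.B⟩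

/-- A bundled object of the category of rooted cluster algebras: an ambient field
together with a seed in it. -/
structure ClusObj : Type (x₀ + 1) where
  carrier : Type x₀
  [fieldStr : Field carrier]
  seed : Seed carrier

attribute [instance] ClusObj.fieldStr

/-- `Δ` separates `s₁` and `s₂` in the seed `S`. -/
def Separates {K : Type u} [Field K] (S : Seed K) (Δ s₁ s₂ : Set K) : Prop :=
  Δ ⊆ S.cluster \ S.ex ∧ S.cluster = s₁ ∪ s₂ ∪ Δ ∧
    Disjoint s₁ s₂ ∧ Disjoint s₁ Δ ∧ Disjoint s₂ Δ ∧
    ∀ y ∈ s₁, ∀ z ∈ s₂, S.B y z = 0 ∧ S.B z y = 0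

/-- Two seeds are glueable along frozen subsets `Δ₁`, `Δ₂` via `φ` when the full
subseeds on `Δ₁` and `Δ₂` are isomorphic along `φ`. -/
def Glueable {K : Type u} {L : Type v} [Field K] [Field L] (S₁ : Seed K) (S₂ : Seed L)
    (Δ₁ : Set K) (Δ₂ : Set L) (φ : K → L) : Prop :=
  Δ₁ ⊆ S₁.cluster \ S₁.ex ∧ Δ₂ ⊆ S₂.cluster \ S₂.ex ∧
    SeedIso (S₁.subseed Δ₁) (S₂.subseed Δ₂) φ

/-- `Sg` is the amalgamated sum of `S₁` and `S₂` along `Δ₁ ≅ Δ₂`, with respect to the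
identifications `e₁`, `e₂` of the ambient variables. -/
structure IsAmalgamatedSum {K : Type u} {L : Type v} {F : Type w}
    [Field K] [Field L] [Field F]
    (S₁ : Seed K) (S₂ : Seed L) (Δ₁ : Set K) (Δ₂ : Set L) (φ : K → L)
    (Sg : Seed F) (e₁ : K → F) (e₂ : L → F) : Prop where
  inj₁ : Set.InjOn e₁ S₁.cluster
  inj₂ : Set.InjOn e₂ S₂.cluster
  compat : ∀ z ∈ Δ₁, e₁ z = e₂ (φ z)
  glueDelta : e₁ '' Δ₁ = e₂ '' Δ₂
  disj₁ : (e₁ '' (S₁.cluster \ Δ₁)) ∩ (e₂ '' S₂.cluster) = ∅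
  disj₂ : (e₂ '' (S₂.cluster \ Δ₂)) ∩ (e₁ '' S₁.cluster) = ∅
  cluster_eq : Sg.cluster = e₁ '' S₁.cluster ∪ e₂ '' S₂.cluster
  ex_eq : Sg.ex = e₁ '' S₁.ex ∪ e₂ '' S₂.ex
  matrix₁ : ∀ y ∈ S₁.cluster, ∀ z ∈ S₁.cluster, Sg.B (e₁ y) (e₁ z) = S₁.B y z
  matrix₂ : ∀ y ∈ S₂.cluster, ∀ z ∈ S₂.cluster, Sg.B (e₂ y) (e₂ z) = S₂.B y z
  matrix₀ : ∀ y ∈ S₁.cluster \ Δ₁, ∀ z ∈ S₂.cluster \ Δ₂,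
    Sg.B (e₁ y) (e₂ z) = 0 ∧ Sg.B (e₂ z) (e₁ y) = 0

universe y₀

/-- The seed `((x₁), ∅, [0])`, with rooted cluster algebra `ℤ[x₁]`. -/
def polySeed : Seed (RatFunc ℚ) :=
  ⟨{RatFunc.X}, ∅, Set.empty_subset _, fun _ _ => 0⟩

/-- The seed `((x₁), (x₁), [0])`, with rooted cluster algebra `ℤ[x₁, 2/x₁]`. -/
def exSeed : Seed (RatFunc ℚ) :=
  ⟨{RatFunc.X}, {RatFunc.X}, subset_rfl, fun _ _ => 0⟩

/-! ### Auxiliary material -/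

/-- The mutated seed `((2/x₁), (2/x₁), [0])`. -/
def seedB : Seed (RatFunc ℚ) :=
  ⟨{2 / RatFunc.X}, {2 / RatFunc.X}, subset_rfl, fun _ _ => 0⟩

lemma seed_ext' {K : Type u} [Field K] {S T : Seed K} (h1 : S.cluster = T.cluster)
    (h2 : S.ex = T.ex) (h3 : S.B = T.B) : S = T := by
  cases S; cases T; simp_all

lemma ratTwo_ne_zero : (2 : RatFunc ℚ) ≠ 0 := by
  intro h
  have h2 : algebraMap (Polynomial ℚ) (RatFunc ℚ) 2 = algebraMap (Polynomial ℚ) (RatFunc ℚ) 0 := by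
    rw [map_ofNat, map_zero, h]
  exact (by norm_num : (2 : Polynomial ℚ) ≠ 0) (RatFunc.algebraMap_injective ℚ h2)

lemma two_div_two_div : (2 : RatFunc ℚ) / (2 / RatFunc.X) = RatFunc.X := by
  rw [div_div_eq_mul_div, mul_comm, mul_div_assoc, div_self ratTwo_ne_zero, mul_one]

lemma mutVar_zeroB {S : Seed (RatFunc ℚ)} (hB : S.B = fun _ _ => 0) (x : RatFunc ℚ) :
    S.mutVar x = 2 / x := by
  have h1 : {y | y ∈ S.cluster ∧ 0 < S.B x y} = ∅ := by ext y; simp [hB]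
  have h2 : {y | y ∈ S.cluster ∧ S.B x y < 0} = ∅ := by ext y; simp [hB]
  rw [Seed.mutVar, h1, h2, finprod_mem_empty, finprod_mem_empty]
  norm_num

lemma mutate_zeroB {S : Seed (RatFunc ℚ)} (hB : S.B = fun _ _ => 0) (x : RatFunc ℚ) :
    (S.mutate x).B = fun _ _ => 0 := by
  funext y z
  simp [Seed.mutate, mutB, hB]

lemma mutate_exSeed : exSeed.mutate RatFunc.X = seedB := by
  refine seed_ext' ?_ ?_ (mutate_zeroB rfl _)
  · show insert (exSeed.mutVar RatFunc.X) (({RatFunc.X} : Set (RatFunc ℚ)) \ {RatFunc.X}) = _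
    rw [mutVar_zeroB rfl]
    simp [seedB]
  · show insert (exSeed.mutVar RatFunc.X) (({RatFunc.X} : Set (RatFunc ℚ)) \ {RatFunc.X}) = _
    rw [mutVar_zeroB rfl]
    simp [seedB]

lemma mutate_seedB : seedB.mutate (2 / RatFunc.X) = exSeed := by
  refine seed_ext' ?_ ?_ (mutate_zeroB rfl _)
  · show insert (seedB.mutVar (2 / RatFunc.X))
      (({2 / RatFunc.X} : Set (RatFunc ℚ)) \ {2 / RatFunc.X}) = _
    rw [mutVar_zeroB rfl, two_div_two_div]
    simp [exSeed]
  · show insert (seedB.mutVar (2 / RatFunc.X))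
      (({2 / RatFunc.X} : Set (RatFunc ℚ)) \ {2 / RatFunc.X}) = _
    rw [mutVar_zeroB rfl, two_div_two_div]
    simp [exSeed]

lemma mutateSeq_mem : ∀ (l : List (RatFunc ℚ)) (S : Seed (RatFunc ℚ)),
    (S = exSeed ∨ S = seedB) → S.Admissible l →
    (S.mutateSeq l = exSeed ∨ S.mutateSeq l = seedB)
  | [], _, hS, _ => hS
  | y :: l, S, hS, hadm => by
    rcases hS with rfl | rfl
    · obtain ⟨hy, hl⟩ := hadm
      have hyX : y = RatFunc.X := hy
      subst hyX
      rw [Seed.mutateSeq]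
      rw [mutate_exSeed] at hl ⊢
      exact mutateSeq_mem l seedB (Or.inr rfl) hl
    · obtain ⟨hy, hl⟩ := hadm
      have hyX : y = 2 / RatFunc.X := hy
      subst hyX
      rw [Seed.mutateSeq]
      rw [mutate_seedB] at hl ⊢
      exact mutateSeq_mem l exSeed (Or.inl rfl) hl

lemma clusterVars_exSeed :
    exSeed.clusterVars = ({RatFunc.X, 2 / RatFunc.X} : Set (RatFunc ℚ)) := by
  ext a
  simp only [Seed.clusterVars, Set.mem_iUnion]
  constructor
  · rintro ⟨l, hl, hal⟩
    rcases mutateSeq_mem l exSeed (Or.inl rfl) hl with h | h <;> rw [h] at hal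
    · exact Or.inl hal
    · exact Or.inr hal
  · rintro (rfl | rfl)
    · exact ⟨[], trivial, rfl⟩
    · refine ⟨[RatFunc.X], ⟨rfl, trivial⟩, ?_⟩
      simp only [Seed.mutateSeq]
      rw [mutate_exSeed]
      exact rfl

lemma admissible_polySeed {l : List (RatFunc ℚ)} (h : polySeed.Admissible l) : l = [] := by
  cases l with
  | nil => rfl
  | cons y l => exact absurd h.1 (Set.notMem_empty y)

lemma clusterVars_polySeed : polySeed.clusterVars = ({RatFunc.X} : Set (RatFunc ℚ)) := by
  ext a
  simp only [Seed.clusterVars, Set.mem_iUnion]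
  constructor
  · rintro ⟨l, hl, hal⟩
    rw [admissible_polySeed hl] at hal
    exact hal
  · intro h
    exact ⟨[], trivial, h⟩

lemma polySeed_algebra : polySeed.algebra = Subring.closure ({RatFunc.X} : Set (RatFunc ℚ)) := by
  rw [Seed.algebra, clusterVars_polySeed]

lemma exSeed_algebra :
    exSeed.algebra = Subring.closure ({RatFunc.X, 2 / RatFunc.X} : Set (RatFunc ℚ)) := by
  rw [Seed.algebra, clusterVars_exSeed]

lemma X_mem_poly : RatFunc.X ∈ polySeed.algebra := by
  rw [polySeed_algebra]; exact Subring.subset_closure rfl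

lemma X_mem_ex : RatFunc.X ∈ exSeed.algebra := by
  rw [exSeed_algebra]; exact Subring.subset_closure (Or.inl rfl)

lemma twoX_mem_ex : 2 / RatFunc.X ∈ exSeed.algebra := by
  rw [exSeed_algebra]; exact Subring.subset_closure (Or.inr rfl)

lemma poly_le_ex : polySeed.algebra ≤ exSeed.algebra := by
  rw [polySeed_algebra, exSeed_algebra]
  exact Subring.closure_mono (by rintro a rfl; exact Or.inl rfl)

lemma twoX_not_poly : 2 / RatFunc.X ∉ polySeed.algebra := by
  rw [polySeed_algebra]
  intro h
  have hle : Subring.closure ({RatFunc.X} : Set (RatFunc ℚ)) ≤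
      (algebraMap (Polynomial ℚ) (RatFunc ℚ)).range := by
    rw [Subring.closure_le]
    rintro a rfl
    exact ⟨Polynomial.X, RatFunc.algebraMap_X⟩
  obtain ⟨p, hp⟩ := hle h
  have hX : algebraMap (Polynomial ℚ) (RatFunc ℚ) Polynomial.X = RatFunc.X :=
    RatFunc.algebraMap_X
  have hmul : algebraMap (Polynomial ℚ) (RatFunc ℚ) (p * Polynomial.X) =
      algebraMap (Polynomial ℚ) (RatFunc ℚ) 2 := by
    rw [map_mul, hp, hX, map_ofNat, div_mul_cancel₀ _ RatFunc.X_ne_zero]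
  have hpoly : p * Polynomial.X = 2 := RatFunc.algebraMap_injective ℚ hmul
  have := congrArg (Polynomial.eval 0) hpoly
  simp at this

/-- Two ring homomorphisms defined on a subring that is a closure agree if they agree on
the generators. -/
lemma ringhom_ext_of_closure {R : Type u} {S : Type v} [CommRing R] [Ring S] {s : Set R}
    {T : Subring R} (hT : T = Subring.closure s)
    (g h : T →+* S) (hgen : ∀ x (hx : x ∈ T), x ∈ s → g ⟨x, hx⟩ = h ⟨x, hx⟩) : g = h := by
  subst hT
  refine RingHom.ext fun a => ?_
  obtain ⟨x, hx⟩ := a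
  induction hx using Subring.closure_induction with
  | mem x hx => exact hgen x (Subring.subset_closure hx) hx
  | zero => exact (map_zero g).trans (map_zero h).symm
  | one => exact (map_one g).trans (map_one h).symm
  | add x y hx hy ihx ihy =>
    show g (⟨x, hx⟩ + ⟨y, hy⟩) = h (⟨x, hx⟩ + ⟨y, hy⟩)
    rw [map_add, map_add, ihx, ihy]
  | neg x hx ihx =>
    show g (-⟨x, hx⟩) = h (-⟨x, hx⟩)
    rw [map_neg, map_neg, ihx]
  | mul x y hx hy ihx ihy =>
    show g (⟨x, hx⟩ * ⟨y, hy⟩) = h (⟨x, hx⟩ * ⟨y, hy⟩)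
    rw [map_mul, map_mul, ihx, ihy]

lemma incl_val {R : Type u} [Ring R] {S T : Subring R} (h : S ≤ T) (x : S) :
    (Subring.inclusion h x : R) = x := rfl

lemma incl_inj {R : Type u} [Ring R] {S T : Subring R} (h : S ≤ T) :
    Function.Injective (Subring.inclusion h) := fun a b hab =>
  Subtype.ext (by rw [← incl_val h a, ← incl_val h b, hab])

lemma incl_apply_mk {R : Type u} [Ring R] {S T : Subring R} (h : S ≤ T) (x : R)
    (hx : x ∈ S) (hx' : x ∈ T) : Subring.inclusion h ⟨x, hx⟩ = ⟨x, hx'⟩ :=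
  Subtype.ext (incl_val h _)

lemma mk_mul_mk {R : Type u} [Ring R] {S : Subring R} (x y : R) (hx : x ∈ S) (hy : y ∈ S)
    (hxy : x * y ∈ S) : (⟨x, hx⟩ : S) * ⟨y, hy⟩ = ⟨x * y, hxy⟩ := rfl

lemma coe_eq_two {R : Type u} [Ring R] {S : Subring R} {x : S} (h : x = 2) :
    (x : R) = 2 := by rw [h]; rfl

lemma mk_eq_two {R : Type u} [Ring R] {S : Subring R} (x : R) (hx : x ∈ S) (h : x = 2) :
    (⟨x, hx⟩ : S) = 2 := by subst h; exact Subtype.ext rfl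
/-- the identity of `ℚ(x₁)` induces a rooted cluster morphism
`ℤ[x₁] = A(Σ₁) → A(Σ₂) = ℤ[x₁, 2/x₁]` which is both a monomorphism and an epimorphism
in `Clus` but not an isomorphism. -/
theorem bimorphism_not_isomorphism :
    (exSeed.algebra : Set (RatFunc ℚ)) =
      (Subring.closure ({RatFunc.X, 2 / RatFunc.X} : Set (RatFunc ℚ)) : Set (RatFunc ℚ)) ∧
    ∃ f : polySeed.algebra →+* exSeed.algebra,
      (∀ a ∈ (polySeed.algebra : Set (RatFunc ℚ)), mapFn polySeed f a = a) ∧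
      IsRCM polySeed exSeed f ∧
      (∀ (X : ClusObj.{y₀}), IsSeed X.seed →
        ∀ g h : X.seed.algebra →+* polySeed.algebra,
          IsRCM X.seed polySeed g → IsRCM X.seed polySeed h →
            f.comp g = f.comp h → g = h) ∧
      (∀ (X : ClusObj.{y₀}), IsSeed X.seed →
        ∀ g h : exSeed.algebra →+* X.seed.algebra,
          IsRCM exSeed X.seed g → IsRCM exSeed X.seed h →
            g.comp f = h.comp f → g = h) ∧
      ¬ ∃ g : exSeed.algebra →+* polySeed.algebra,
          IsRCM exSeed polySeed g ∧
            g.comp f = RingHom.id _ ∧ f.comp g = RingHom.id _ := by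
  refine ⟨by rw [exSeed_algebra], Subring.inclusion poly_le_ex, ?_, ?_, ?_, ?_, ?_⟩
  -- the map is the identity on A(Σ₁)
  · intro a ha
    have ha' : a ∈ polySeed.algebra := ha
    rw [mapFn, dif_pos ha']
    exact incl_val _ _
  -- (CM1)-(CM3)
  · refine ⟨?_, ?_, ?_⟩
    · rintro y rfl
      have hX : mapFn polySeed (Subring.inclusion poly_le_ex) RatFunc.X = RatFunc.X := by
        rw [mapFn, dif_pos X_mem_poly]
        exact incl_val _ _
      rw [hX]
      exact Or.inl rfl
    · rintro y ⟨⟩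
    · intro l hl y hy
      rw [admissible_polySeed hl.1]
      rfl
  -- monomorphism
  · intro X _ g h _ _ hcomp
    refine RingHom.ext fun a => incl_inj poly_le_ex ?_
    have hc := RingHom.congr_fun hcomp a
    rw [RingHom.comp_apply, RingHom.comp_apply] at hc
    exact hc
  -- epimorphism
  · intro X hX g h _ _ hcomp
    set xX : exSeed.algebra := ⟨RatFunc.X, X_mem_ex⟩ with hxX
    set uX : exSeed.algebra := ⟨2 / RatFunc.X, twoX_mem_ex⟩ with huX
    have hfX : Subring.inclusion poly_le_ex ⟨RatFunc.X, X_mem_poly⟩ = xX :=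
      incl_apply_mk _ _ _ _
    have hgx : g xX = h xX := by
      have hc := RingHom.congr_fun hcomp ⟨RatFunc.X, X_mem_poly⟩
      rw [RingHom.comp_apply, RingHom.comp_apply, hfX] at hc
      exact hc
    have h2K : (2 : X.carrier) ≠ 0 := by
      intro h2
      have hinj := hX.free.algebraMap_injective
      have h20 : algebraMap ℤ X.carrier 2 = algebraMap ℤ X.carrier 0 := by
        rw [map_ofNat, map_zero, h2]
      exact (by norm_num : (2:ℤ) ≠ 0) (hinj h20)
    have hxu : xX * uX = (2 : exSeed.algebra) := by
      have hm : RatFunc.X * (2 / RatFunc.X) = (2 : RatFunc ℚ) := by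
        rw [mul_div_assoc', mul_comm, ← mul_div_assoc', div_self RatFunc.X_ne_zero, mul_one]
      rw [hxX, huX, mk_mul_mk _ _ _ _ (Subring.mul_mem _ X_mem_ex twoX_mem_ex)]
      exact mk_eq_two _ _ hm
    have hg2 : g xX * g uX = 2 := by rw [← map_mul, hxu, map_ofNat]
    have hh2 : h xX * h uX = 2 := by rw [← map_mul, hxu, map_ofNat]
    have hgu : g uX = h uX := by
      have hgxv : ((g xX : X.seed.algebra) : X.carrier) = ((h xX : X.seed.algebra) : X.carrier) := by
        rw [hgx]
      have hv2 : ((g xX : X.seed.algebra) : X.carrier) * (g uX : X.carrier) = 2 := by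
        rw [← Subring.coe_mul]
        exact coe_eq_two hg2
      have hv3 : ((h xX : X.seed.algebra) : X.carrier) * (h uX : X.carrier) = 2 := by
        rw [← Subring.coe_mul]
        exact coe_eq_two hh2
      have hzero : (g xX : X.carrier) * ((g uX : X.carrier) - (h uX : X.carrier)) = 0 := by
        rw [mul_sub, hv2, hgxv, hv3, sub_self]
      have hgxne : (g xX : X.carrier) ≠ 0 := by
        intro h0
        rw [h0, zero_mul] at hv2
        exact h2K hv2.symm
      rcases mul_eq_zero.mp hzero with h0 | h0
      · exact absurd h0 hgxne
      · exact Subtype.ext (sub_eq_zero.mp h0)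
    refine ringhom_ext_of_closure exSeed_algebra g h ?_
    rintro x hx (rfl | rfl)
    · exact hgx
    · exact hgu
  -- not an isomorphism
  · rintro ⟨g, -, -, hfg⟩
    have hc := RingHom.congr_fun hfg ⟨2 / RatFunc.X, twoX_mem_ex⟩
    rw [RingHom.comp_apply, RingHom.id_apply] at hc
    have hv := congrArg Subtype.val hc
    rw [incl_val] at hv
    have hv' : ((g ⟨2 / RatFunc.X, twoX_mem_ex⟩ : polySeed.algebra) : RatFunc ℚ) =
        2 / RatFunc.X := hv
    exact twoX_not_poly (hv' ▸ (g ⟨2 / RatFunc.X, twoX_mem_ex⟩).2)
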